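/- arXiv:2406.01643 — 2 statements merged into one kernel-verified Lean document; each statement's English description precedes it below -/
import Mathlib

section
/- The scalar system ẋ = -(1/τ)x + (K₁/τ)u with output y = x − K₂u, where τ > 0 and K₂ > K₁ > 0, is output strictly negative imaginary: with storage function S(x) = x²/(2K₁), for every ε with 0 < ε ≤ τ/K₁, along trajectories Ṡ ≤ u·ẏ_h − ε·ẏ_h², where y_h = x denotes the state-dependent part of the output. -/
/-! With storage `S = x² / (2K₁)` one has `Ṡ = x ẋ / K₁`, and the state equation reads
`τ ẋ = K₁ u - x`. Hence the supply exceeds the storage rate by exactly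
`u ẋ - x ẋ / K₁ = (τ / K₁) ẋ² ≥ ε ẋ²`. -/

theorem HasDerivAt.sq_div_two_mul {x : ℝ → ℝ} {v t : ℝ} (hx : HasDerivAt x v t) (c : ℝ) :
    HasDerivAt (fun s => x s ^ 2 / (2 * c)) (x t * v / c) t := by
  refine ((hx.fun_pow 2).div_const (2 * c)).congr_deriv ?_
  by_cases hc : c = 0
  · simp [hc]
  · field_simp
    ring

section FirstOrderLag

variable {τ K x u : ℝ}

theorem firstOrderLag_supply_sub_storageRate (hτ : τ ≠ 0) (hK : K ≠ 0) :
    u * (-(1 / τ) * x + (K / τ) * u) - x * (-(1 / τ) * x + (K / τ) * u) / K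
      = τ / K * (-(1 / τ) * x + (K / τ) * u) ^ 2 := by
  field_simp
  ring

theorem firstOrderLag_storageRate_le {ε : ℝ} (hτ : τ ≠ 0) (hK : K ≠ 0) (hε : ε ≤ τ / K) :
    x * (-(1 / τ) * x + (K / τ) * u) / K
      ≤ u * (-(1 / τ) * x + (K / τ) * u) - ε * (-(1 / τ) * x + (K / τ) * u) ^ 2 := by
  have hsupply := firstOrderLag_supply_sub_storageRate (x := x) (u := u) hτ hK
  linarith [mul_le_mul_of_nonneg_right hε (sq_nonneg (-(1 / τ) * x + (K / τ) * u))]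

end FirstOrderLag

theorem stmt_3_general (τ K₁ ε : ℝ) (hτ : 0 < τ) (hK₁ : 0 < K₁)
    (hετ : ε ≤ τ / K₁)
    (x u : ℝ → ℝ)
    (hx : ∀ t, HasDerivAt x (-(1 / τ) * x t + (K₁ / τ) * u t) t) :
    ∀ t, ∃ d : ℝ, HasDerivAt (fun s => (x s) ^ 2 / (2 * K₁)) d t ∧
      d ≤ u t * (-(1 / τ) * x t + (K₁ / τ) * u t)
          - ε * (-(1 / τ) * x t + (K₁ / τ) * u t) ^ 2 :=
  fun t => ⟨_, (hx t).sq_div_two_mul K₁,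
    firstOrderLag_storageRate_le hτ.ne' hK₁.ne' hετ⟩

/-- The controller ẋ = -(1/τ)x + (K₁/τ)u, y = x − K₂u, with τ > 0,
K₂ > K₁ > 0, is OSNI with storage S(x) = x²/(2K₁): for every
0 < ε ≤ τ/K₁, along trajectories Ṡ ≤ u·ẋ − ε·ẋ² (ẏ_h = ẋ). -/
theorem stmt_3 (τ K₁ K₂ ε : ℝ) (hτ : 0 < τ) (hK₁ : 0 < K₁) (hK : K₁ < K₂)
    (hε : 0 < ε) (hετ : ε ≤ τ / K₁)
    (x u : ℝ → ℝ)
    (hx : ∀ t, HasDerivAt x (-(1 / τ) * x t + (K₁ / τ) * u t) t) :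
    ∀ t, ∃ d : ℝ, HasDerivAt (fun s => (x s) ^ 2 / (2 * K₁)) d t ∧
      d ≤ u t * (-(1 / τ) * x t + (K₁ / τ) * u t)
          - ε * (-(1 / τ) * x t + (K₁ / τ) * u t) ^ 2 :=
  stmt_3_general τ K₁ ε hτ hK₁ hετ x u hx
end

section
/- In the one-axis model, the control law Q^{ST}ᵢ = |Vᵢ|·(uᵢ^V + Σ_{j∈Nᵢ} B_{ij}(V_nom cos δ̄_{ij} − |Vⱼ| cos δ_{ij})) substituted into the voltage dynamics γᵢ|Vᵢ|' = Qᵢ^G(|Vᵢ|) − Qᵢ^E + Qᵢ^{ST} divided by |Vᵢ| > 0, with Qᵢ^G(|Vᵢ|) = |Vᵢ|(E^{ex}ᵢ − |Vᵢ|)/(X_d − X_d'), Qᵢ^E = −Σⱼ B_{ij}|Vᵢ||Vⱼ| cos δ_{ij}, and equilibrium condition (E^{ex}ᵢ − V_nom)/(X_d−X_d') + Σⱼ B_{ij}V_nom cos δ̄_{ij} = 0 (including j = i with cos δ̄_{ii}=1), yields the linear decoupled dynamics γᵢ Ṽᵢ' = −αᵢ Ṽᵢ + uᵢ^V, where Ṽᵢ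 = |Vᵢ| − V_nom and αᵢ = 1/(X_d − X_d') − B_{ii}. -/
/-!
Dividing the voltage dynamics by `|Vᵢ| > 0`, the coupling flow `Σ_{j ≠ i} B i j |Vⱼ| cos δᵢⱼ`
of `Qᵢ^E` cancels against the same sum in the control law, and the equilibrium condition
turns the remaining constant terms into `-(1/(X_d - X_d') - B i i) V_nom`; what is left is
linear in the deviation `|Vᵢ| - V_nom`.
-/

open Finset Real

section ReactiveFlow

variable {ι : Type*} [Fintype ι] [DecidableEq ι] (B : ι → ι → ℝ)

/-- Reactive power flow from the buses `j ≠ i` into bus `i`, per unit of `|Vᵢ|`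
(a non-neighbour `j` has `B i j = 0`). -/
noncomputable def neighborFlow (W θ : ι → ℝ) (i : ι) : ℝ :=
  ∑ j ∈ univ.erase i, B i j * (W j * cos (θ i - θ j))

theorem sum_flow_eq_diag_add_neighborFlow (W θ : ι → ℝ) (i : ι) :
    ∑ j, B i j * (W j * cos (θ i - θ j)) = B i i * W i + neighborFlow B W θ i := by
  rw [← add_sum_erase _ _ (mem_univ i), sub_self, cos_zero, mul_one, neighborFlow]

theorem sum_nominal_flow_eq (Vnom : ℝ) (θ : ι → ℝ) (i : ι) :
    ∑ j, B i j * (Vnom * cos (θ i - θ j)) = B i i * Vnom + neighborFlow B (fun _ ↦ Vnom) θ i :=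
  sum_flow_eq_diag_add_neighborFlow B (fun _ ↦ Vnom) θ i

theorem sum_coupling_flow_eq (V δ : ι → ℝ) (i : ι) :
    ∑ j, B i j * (V i * V j * cos (δ i - δ j)) = V i * (B i i * V i + neighborFlow B V δ i) := by
  rw [← sum_flow_eq_diag_add_neighborFlow, mul_sum]
  exact sum_congr rfl fun j _ ↦ by ring

theorem sum_feedback_eq_neighborFlow_sub (Vnom : ℝ) (V δ δbar : ι → ℝ) (i : ι) :
    ∑ j ∈ univ.erase i, B i j * (Vnom * cos (δbar i - δbar j) - V j * cos (δ i - δ j)) =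
      neighborFlow B (fun _ ↦ Vnom) δbar i - neighborFlow B V δ i := by
  simp only [neighborFlow, ← sum_sub_distrib, mul_sub]

end ReactiveFlow

/-- The one-bus closed loop, with `A` and `C` the nominal and actual neighbour flows and
`x = X_d - X_d'`. -/
theorem closed_loop_linear {K : Type*} [Field K] {γ x b E Vnom u v vdot A C : K} (hv : v ≠ 0)
    (hdyn : γ * (v * vdot) = v * (E - v) / x + v * (b * v + C) + v * (u + (A - C)))
    (heq : (E - Vnom) / x + (b * Vnom + A) = 0) :
    γ * vdot = -(1 / x - b) * (v - Vnom) + u :=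
  mul_left_cancel₀ hv (by linear_combination hdyn + v * heq)

theorem stmt_16_general (n : ℕ) (i : Fin n)
    (γ Xd Xd' Eex Vnom u QST Vdot : ℝ)
    (B : Fin n → Fin n → ℝ) (V δ δbar : Fin n → ℝ)
    (hVi : 0 < V i)
    (hQST : QST = V i * (u + ∑ j ∈ univ.erase i, B i j *
      (Vnom * Real.cos (δbar i - δbar j) - V j * Real.cos (δ i - δ j))))
    (hdyn : γ * (V i * Vdot) =
      V i * (Eex - V i) / (Xd - Xd')
      - (-(∑ j, B i j * (V i * V j * Real.cos (δ i - δ j)))) + QST)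
    (heq : (Eex - Vnom) / (Xd - Xd')
      + ∑ j, B i j * (Vnom * Real.cos (δbar i - δbar j)) = 0) :
    γ * Vdot = -(1 / (Xd - Xd') - B i i) * (V i - Vnom) + u := by
  rw [hQST, sum_coupling_flow_eq, sum_feedback_eq_neighborFlow_sub, sub_neg_eq_add] at hdyn
  rw [sum_nominal_flow_eq] at heq
  exact closed_loop_linear hVi.ne' hdyn heq

/-- The feedback-linearizing reactive power control cancels the coupling
reactive power flow, yielding γ Ṽ' = −α Ṽ + u with Ṽ = |Vᵢ| − V_nom and
α = 1/(X_d − X_d') − B_{ii}. Here `Vdot` denotes |Vᵢ|' = Ṽᵢ'. -/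
theorem stmt_16 (n : ℕ) (i : Fin n)
    (γ Xd Xd' Eex Vnom u QST Vdot : ℝ)
    (B : Fin n → Fin n → ℝ) (V δ δbar : Fin n → ℝ)
    (hX : Xd' < Xd) (hVi : 0 < V i)
    (hQST : QST = V i * (u + ∑ j ∈ univ.erase i, B i j *
      (Vnom * Real.cos (δbar i - δbar j) - V j * Real.cos (δ i - δ j))))
    (hdyn : γ * (V i * Vdot) =
      V i * (Eex - V i) / (Xd - Xd')
      - (-(∑ j, B i j * (V i * V j * Real.cos (δ i - δ j)))) + QST)
    (heq : (Eex - Vnom) / (Xd - Xd')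
      + ∑ j, B i j * (Vnom * Real.cos (δbar i - δbar j)) = 0) :
    γ * Vdot = -(1 / (Xd - Xd') - B i i) * (V i - Vnom) + u :=
  stmt_16_general n i γ Xd Xd' Eex Vnom u QST Vdot B V δ δbar hVi hQST hdyn heq
end
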